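/- arXiv:0905.2665 — 2 statements merged into one kernel-verified Lean document; each statement's English description precedes it below -/
import Mathlib

section
/- Every total continuous function Φ : A^A → A (where A is an infinite discrete set and A^A has the product topology) is sequential, i.e., there exists a well-founded total sequential tree T of finite partial functions on A and a function F from the leaves of T to A such that Φ = Φ_{T,F}. -/
open Classical

noncomputable section

namespace OostenK2

universe u

/-! ### Finite partial functions -/

/-- Finite partial functions `A ⇀ A`, as finite functional graphs,
ordered by inclusion of graphs. -/
abbrev FPF (A : Type u) : Type u :=
  {p : Set (A × A) // (∀ ⦃a b b'⦄, (a, b) ∈ p → (a, b') ∈ p → b = b') ∧ p.Finite}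

variable {A : Type u}

/-- The domain of a finite partial function. -/
def FPF.dom (p : FPF A) : Set A := Prod.fst '' p.val

/-- The empty finite partial function (the root of sequential trees). -/
def FPF.empty (A : Type u) : FPF A :=
  ⟨∅, fun _ _ _ h => absurd h (Set.notMem_empty _), Set.finite_empty⟩

/-- A total function `α` extends the finite partial function `p`. -/
def agrees (α : A → A) (p : FPF A) : Prop := ∀ ⦃a b⦄, (a, b) ∈ p.val → α a = b

/-- A partial function `β` extends the finite partial function `p`. -/
def agreesP (β : A → Option A) (p : FPF A) : Prop :=
  ∀ ⦃a b⦄, (a, b) ∈ p.val → β a = some b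

/-- Two finite partial functions are compatible if their union is a function. -/
def compatFPF (s t : FPF A) : Prop :=
  ∀ ⦃a b b'⦄, (a, b) ∈ s.val → (a, b') ∈ t.val → b = b'

/-! ### Trees -/

section Trees

variable {X : Type*} [PartialOrder X]

/-- A leaf of `T`: an element of `T` with no strict extension in `T`. -/
def IsLeaf (T : Set X) (p : X) : Prop := p ∈ T ∧ ¬∃ q ∈ T, p < q

/-- `q` is an immediate successor of `p` in `T`. -/
def ImmSucc (T : Set X) (p q : X) : Prop :=
  q ∈ T ∧ p < q ∧ ¬∃ t ∈ T, p < t ∧ t < q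

/-- `T` is a tree with root `root`: the root belongs to `T`, lies below every
element, and the predecessors of any element form a chain. -/
def IsTreeOn (root : X) (T : Set X) : Prop :=
  root ∈ T ∧ (∀ p ∈ T, root ≤ p) ∧ ∀ p ∈ T, IsChain (· ≤ ·) {t | t ∈ T ∧ t ≤ p}

/-- A tree is well-founded iff it has no infinite strictly increasing path. -/
def WellFoundedTree (T : Set X) : Prop :=
  ¬∃ f : ℕ → X, (∀ n, f n ∈ T) ∧ StrictMono f

end Trees

/-- A sequential tree: a tree of finite partial functions, rooted at the empty
function, in which all immediate successors of a non-leaf `p` have domain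
`dom p ∪ {a}` for a single `a ∉ dom p`. -/
def IsSeqTree (T : Set (FPF A)) : Prop :=
  IsTreeOn (FPF.empty A) T ∧
  ∀ p ∈ T, ¬IsLeaf T p →
    ∃ a ∉ FPF.dom p, ∀ q, ImmSucc T p q → FPF.dom q = insert a (FPF.dom p)

/-- A total sequential tree: the immediate successors of a non-leaf `p` are
*all* extensions of `p` with domain `dom p ∪ {a}`. -/
def IsTotalSeqTree (T : Set (FPF A)) : Prop :=
  IsTreeOn (FPF.empty A) T ∧
  ∀ p ∈ T, ¬IsLeaf T p →
    ∃ a ∉ FPF.dom p,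
      ∀ q : FPF A, ImmSucc T p q ↔ p < q ∧ FPF.dom q = insert a (FPF.dom p)

/-- `Φ` (as a relation `(A → A) → A → Prop`) is a partial sequential function:
`Φ α = b` iff the path of `α` through some total sequential tree `T` ends in a
leaf `v` with `F v = b`. -/
def SeqRel (Φ : (A → A) → A → Prop) : Prop :=
  ∃ (T : Set (FPF A)) (F : FPF A → A), IsTotalSeqTree T ∧
    ∀ α b, Φ α b ↔ ∃ v, IsLeaf T v ∧ agrees α v ∧ F v = b

/-- A total bisequential tree: pairs of finite partial functions ordered by
pairwise inclusion; at every non-leaf, either the first or the second component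
is interrogated at a single new argument, with all possible answers present. -/
def IsTotalBiTree (T : Set (FPF A × FPF A)) : Prop :=
  IsTreeOn (FPF.empty A, FPF.empty A) T ∧
  ∀ p ∈ T, ¬IsLeaf T p →
    (∃ a ∉ FPF.dom p.1, ∀ q : FPF A × FPF A,
        ImmSucc T p q ↔ q.2 = p.2 ∧ p.1 ≤ q.1 ∧ FPF.dom q.1 = insert a (FPF.dom p.1)) ∨
    (∃ b ∉ FPF.dom p.2, ∀ q : FPF A × FPF A,
        ImmSucc T p q ↔ q.1 = p.1 ∧ p.2 ≤ q.2 ∧ FPF.dom q.2 = insert b (FPF.dom p.2))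

/-- `G` is a total bisequential function. -/
def BiSeqTotal (G : (A → A) → (A → A) → A) : Prop :=
  ∃ (T : Set (FPF A × FPF A)) (F : FPF A × FPF A → A), IsTotalBiTree T ∧
    ∀ α β, ∃ v, IsLeaf T v ∧ agrees α v.1 ∧ agrees β v.2 ∧ G α β = F v

/-! ### Interrogations (total functions)

Throughout, `mk : List A → A` is an injective coding of finite sequences,
`qp b` is the code `⟨q,b⟩` of a query and `rp c` the code `⟨r,c⟩` of a result. -/

/-- `L` is an interrogation of `β` by `α`. -/
def Interrog (mk : List A → A) (qp : A → A) (α β : A → A) (L : List A) : Prop :=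
  ∀ j (hj : j < L.length), ∃ b, α (mk (L.take j)) = qp b ∧ β b = L[j]'hj

/-- `φ_α(β) = c` via interrogations. -/
def phiRel (mk : List A → A) (qp rp : A → A) (α β : A → A) (c : A) : Prop :=
  ∃ L, Interrog mk qp α β L ∧ α (mk L) = rp c

/-- `L` is an `a`-interrogation of `β` by `α`. -/
def AInterrog (mk : List A → A) (qp : A → A) (a : A) (α β : A → A) (L : List A) : Prop :=
  ∀ j (hj : j < L.length), ∃ b, α (mk (a :: L.take j)) = qp b ∧ β b = L[j]'hj

/-- `φ^a(α,β) = c` via `a`-interrogations. -/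
def phiA (mk : List A → A) (qp rp : A → A) (a : A) (α β : A → A) (c : A) : Prop :=
  ∃ L, AInterrog mk qp a α β L ∧ α (mk (a :: L)) = rp c

/-- The application of `K₂(A)`: `αβ` is defined with value `γ` iff
`φ^a(α,β) = γ a` for every `a`. -/
def AppRel (mk : List A → A) (qp rp : A → A) (α β γ : A → A) : Prop :=
  ∀ a, phiA mk qp rp a α β (γ a)

/-! ### Partial combinatory algebras (abstractly) -/

/-- A set with a partial binary application. -/
structure PCAStruct (X : Type*) where
  app : X → X → Part X

/-- Extension of the application to `Part`; `Part`-equality is Kleene equality. -/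
def pap {X : Type*} (S : PCAStruct X) (u v : Part X) : Part X :=
  u.bind fun a => v.bind fun b => S.app a b

/-- `S` is a partial combinatory algebra: there are `k`, `s` with
`kxy = x` (everywhere defined), `sxy` defined, and `sxyz ≃ (xz)(yz)`. -/
def IsPCA {X : Type*} (S : PCAStruct X) : Prop :=
  ∃ k s : X,
    (∀ x y : X, pap S (S.app k x) (Part.some y) = Part.some x) ∧
    (∀ x y : X, (pap S (S.app s x) (Part.some y)).Dom) ∧
    (∀ x y z : X,
      pap S (pap S (S.app s x) (Part.some y)) (Part.some z)
        = pap S (S.app x z) (S.app y z))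

/-- `t`, `f` are Booleans of `S`: distinct, with a definition-by-cases combinator. -/
def IsBooleans {X : Type*} (S : PCAStruct X) (t f : X) : Prop :=
  t ≠ f ∧ ∃ C : X, ∀ a b : X,
    pap S (pap S (S.app C t) (Part.some a)) (Part.some b) = Part.some a ∧
    pap S (pap S (S.app C f) (Part.some a)) (Part.some b) = Part.some b

/-- Applicative morphism `γ : S → T`: a total relation such that some realizer
`r` tracks application. -/
def IsAppMor {X Y : Type*} (S : PCAStruct X) (T : PCAStruct Y) (γ : X → Set Y) : Prop :=
  (∀ x, (γ x).Nonempty) ∧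
  ∃ r : Y, ∀ x x' z : X, z ∈ S.app x x' → ∀ b ∈ γ x, ∀ b' ∈ γ x',
    ∃ w, w ∈ pap T (T.app r b) (Part.some b') ∧ w ∈ γ z

/-- The preorder on applicative morphisms. -/
def morLE {X Y : Type*} (T : PCAStruct Y) (γ γ' : X → Set Y) : Prop :=
  ∃ s : Y, ∀ x : X, ∀ b ∈ γ x, ∃ c, c ∈ T.app s b ∧ c ∈ γ' x

def morEquiv {X Y : Type*} (T : PCAStruct Y) (γ γ' : X → Set Y) : Prop :=
  morLE T γ γ' ∧ morLE T γ' γ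

/-- Composition of applicative morphisms (as total relations). -/
def morComp {X Y Z : Type*} (γ : X → Set Y) (ε : Y → Set Z) : X → Set Z :=
  fun x => ⋃ y ∈ γ x, ε y

/-- Decidability of a morphism w.r.t. chosen Booleans. -/
def IsDecidableMor {X Y : Type*} (T : PCAStruct Y) (γ : X → Set Y)
    (tX fX : X) (tY fY : Y) : Prop :=
  ∃ d : Y, (∀ b ∈ γ tX, T.app d b = Part.some tY) ∧
    (∀ b ∈ γ fX, T.app d b = Part.some fY)

/-- `rf` represents the partial function `f : X ⇀ X` w.r.t. `γ`. -/
def RepresentsPFun {X Y : Type*} (T : PCAStruct Y) (γ : X → Set Y)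
    (f : X → Option X) (rf : Y) : Prop :=
  ∀ a x, f a = some x → ∀ b ∈ γ a, ∃ c, c ∈ T.app rf b ∧ c ∈ γ x

/-- The pca `K₂(A)` on `A^A` (application via `a`-interrogations). -/
def K2 (mk : List A → A) (qp rp : A → A) : PCAStruct (A → A) where
  app α β := ⟨∀ a, ∃ c, phiA mk qp rp a α β c, fun h a => (h a).choose⟩

/-! ### Interrogations for partial functions -/

/-- Interrogation of a partial `β` by a partial `α`. -/
def PInterrog (mk : List A → A) (qp : A → A) (α β : A → Option A) (L : List A) : Prop :=
  ∀ j (hj : j < L.length), ∃ b, α (mk (L.take j)) = some (qp b) ∧ β b = some (L[j]'hj)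

/-- `φ_α(β) = c` for partial functions. -/
def phiPRel (mk : List A → A) (qp rp : A → A) (α β : A → Option A) (c : A) : Prop :=
  ∃ L, PInterrog mk qp α β L ∧ α (mk L) = some (rp c)

/-- `a`-interrogation of a partial `β` by a partial `α`. -/
def PAInterrog (mk : List A → A) (qp : A → A) (a : A) (α β : A → Option A)
    (L : List A) : Prop :=
  ∀ j (hj : j < L.length), ∃ b, α (mk (a :: L.take j)) = some (qp b) ∧ β b = some (L[j]'hj)

/-- `φ^a(α,β) = c` for partial functions. -/
def phiPA (mk : List A → A) (qp rp : A → A) (a : A) (α β : A → Option A) (c : A) : Prop :=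
  ∃ L, PAInterrog mk qp a α β L ∧ α (mk (a :: L)) = some (rp c)

/-- The (total!) application of `K₂^p(A)` on partial functions. -/
def K2pApp (mk : List A → A) (qp rp : A → A) (α β : A → Option A) : A → Option A :=
  fun a => if h : ∃ c, phiPA mk qp rp a α β c then some h.choose else none

/-- `K₂^p(A)` as a `PCAStruct` (with everywhere-defined application). -/
def K2p (mk : List A → A) (qp rp : A → A) : PCAStruct (A → Option A) :=
  ⟨fun α β => Part.some (K2pApp mk qp rp α β)⟩

/-! ### A pca with standard structure (Booleans, pairing, tuple coding, recursion) -/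

/-- A pca together with the standard derived structure: Booleans with a case
combinator, pairing, an injective standard tuple coding with combinators
manipulating it, and a fixed-point combinator. All of these exist in any
(nontrivial) pca. -/
structure StdPCA (A : Type u) where
  S : PCAStruct A
  isPCA : IsPCA S
  t : A
  f : A
  t_ne_f : t ≠ f
  Cc : A
  C_t : ∀ a b : A, pap S (pap S (S.app Cc t) (Part.some a)) (Part.some b) = Part.some a
  C_f : ∀ a b : A, pap S (pap S (S.app Cc f) (Part.some a)) (Part.some b) = Part.some b
  pairF : A → A → A
  Pc : A
  P0 : A
  P1 : A
  P_spec : ∀ x y : A, pap S (S.app Pc x) (Part.some y) = Part.some (pairF x y)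
  P0_spec : ∀ x y : A, S.app P0 (pairF x y) = Part.some x
  P1_spec : ∀ x y : A, S.app P1 (pairF x y) = Part.some y
  tup : List A → A
  tup_inj : Function.Injective tup
  CONS : A
  CONS_spec : ∀ (x : A) (L : List A),
    pap S (S.app CONS x) (Part.some (tup L)) = Part.some (tup (x :: L))
  SNOC : A
  SNOC_spec : ∀ (L : List A) (y : A),
    pap S (S.app SNOC (tup L)) (Part.some y) = Part.some (tup (L ++ [y]))
  Zc : A
  Z_spec : ∀ g : A, (S.app Zc g).Dom ∧ ∀ zg ∈ S.app Zc g, ∀ x : A,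
    S.app zg x = pap S (S.app g zg) (Part.some x)

/-- The partial function `x ↦ a·x` represented by `a ∈ A`. -/
def abar (P : StdPCA A) (a : A) : A → Option A :=
  fun x => if h : (P.S.app a x).Dom then some ((P.S.app a x).get h) else none

/-- An `x`-interrogation of the oracle `g : A ⇀ A` by `a ∈ A`, inside the pca. -/
def OInterrog (P : StdPCA A) (g : A → Option A) (a x : A) (L : List A) : Prop :=
  ∀ j (hj : j < L.length), ∃ v,
    P.S.app a (P.tup (x :: L.take j)) = Part.some (P.pairF P.f v) ∧ g v = some (L[j]'hj)

/-- The oracle application of `A[g]` : `a ·^g x = c`. -/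
def oapp (P : StdPCA A) (g : A → Option A) (a x c : A) : Prop :=
  ∃ L, OInterrog P g a x L ∧ P.S.app a (P.tup (x :: L)) = Part.some (P.pairF P.t c)

/-- `fn ≤_T g` : `fn` is representable in `A[g]`. -/
def leT (P : StdPCA A) (fn g : A → Option A) : Prop :=
  ∃ a : A, ∀ x y, fn x = some y → oapp P g a x y

/-- `j` is the join `f ⊔ g`. -/
def JoinSpec (P : StdPCA A) (f g j : A → Option A) : Prop :=
  (∀ x, j (P.pairF P.t x) = f x) ∧ (∀ x, j (P.pairF P.f x) = g x) ∧
  (∀ y, (∀ x, y ≠ P.pairF P.t x ∧ y ≠ P.pairF P.f x) → j y = none)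

/-- `K₂(A)` (built from the coding `mk`, `q`, `r`) is compatible with the pca
structure on `A`: elements of `A` translate between the codings and between
`q, r` and `⊥, ⊤`. -/
def CompatCoding (P : StdPCA A) (mk : List A → A) (q r : A) : Prop :=
  (∃ a : A, ∀ L, P.S.app a (mk L) = Part.some (P.tup L)) ∧
  (∃ b : A, ∀ L, P.S.app b (P.tup L) = Part.some (mk L)) ∧
  (∃ c : A, P.S.app c q = Part.some P.f ∧ P.S.app c r = Part.some P.t)

/-!
The tree is generated by a fair questioning strategy: every node `p` demands the points of a
smallest modulus of continuity of `Φ` at `p` extended by a default value, and demands are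
answered first come, first served; the leaves are the nodes on which `Φ` is already decided.
If some `α` ran through undecided nodes `p₀ ⊆ p₁ ⊆ ⋯` forever, their default extensions
would converge to some `α'`, and for large `k` a modulus of `α'` is also one of `pₖ`, so the
demanded moduli `Wₖ` have bounded size. On the other hand, a witness `γ ⊇ pₘ` of
undecidedness with `Φ γ ≠ Φ α'` forces every later `Wₖ` to meet a fixed finite set outside
`dom pₘ`. Iterating this with the pigeonhole principle, infinitely many `Wₖ` share more points
than their size allows.
-/

open Filter

theorem exists_cons_suffix_of_suffix_of_ne {α : Type*} {l t : List α} (h : l <:+ t)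
    (hne : l ≠ t) : ∃ b, b :: l <:+ t := by
  obtain ⟨u, rfl⟩ := h
  rcases List.eq_nil_or_concat u with rfl | ⟨v, b, rfl⟩
  · exact absurd rfl hne
  · exact ⟨b, v, by simp⟩

namespace FPF

theorem mem_dom {p : FPF A} {a : A} : a ∈ p.dom ↔ ∃ b, (a, b) ∈ p.val := by
  simp [FPF.dom]

theorem dom_mono {p q : FPF A} (h : p ≤ q) : p.dom ⊆ q.dom := Set.image_mono h

theorem exists_notMem_dom [Infinite A] (p : FPF A) : ∃ a, a ∉ p.dom :=
  (p.2.2.image Prod.fst).infinite_compl.nonempty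

def fresh [Infinite A] (p : FPF A) : A := p.exists_notMem_dom.choose

theorem fresh_notMem_dom [Infinite A] (p : FPF A) : p.fresh ∉ p.dom :=
  p.exists_notMem_dom.choose_spec

def extend (p : FPF A) (a b : A) : FPF A :=
  if h : a ∈ p.dom then p else
    ⟨insert (a, b) p.val, by
      intro x c c' hc hc'
      simp only [Set.mem_insert_iff, Prod.mk.injEq] at hc hc'
      rcases hc with ⟨rfl, rfl⟩ | hc <;> rcases hc' with ⟨hx, rfl⟩ | hc'
      · rfl
      · exact absurd (mem_dom.2 ⟨_, hc'⟩) h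
      · exact absurd (mem_dom.2 ⟨_, hc⟩) (hx ▸ h)
      · exact p.2.1 hc hc', p.2.2.insert _⟩

theorem extend_val {p : FPF A} {a : A} (b : A) (h : a ∉ p.dom) :
    (p.extend a b).val = insert (a, b) p.val := by
  rw [extend, dif_neg h]

theorem val_eq_insert_of_le {p q : FPF A} {a b : A} (hpq : p ≤ q) (hab : (a, b) ∈ q.val)
    (hdom : q.dom = insert a p.dom) : q.val = insert (a, b) p.val := by
  ext ⟨y, c⟩
  constructor
  · intro hyc
    rcases (hdom ▸ mem_dom.2 ⟨c, hyc⟩ : y ∈ insert a p.dom) with rfl | hy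
    · rw [q.2.1 hyc hab]
      exact Set.mem_insert _ _
    · obtain ⟨c', hc'⟩ := mem_dom.1 hy
      rw [q.2.1 hyc (hpq hc')]
      exact Set.mem_insert_of_mem _ hc'
  · rintro (h | h)
    · rwa [h]
    · exact hpq h

/-- `p`, extended by an arbitrary default value outside its domain. -/
def toFun [Nonempty A] (p : FPF A) (y : A) : A :=
  if h : ∃ b, (y, b) ∈ p.val then h.choose else Classical.arbitrary A

theorem toFun_eq_of_mem [Nonempty A] {p : FPF A} {y b : A} (h : (y, b) ∈ p.val) :
    p.toFun y = b := by
  have hex : ∃ b, (y, b) ∈ p.val := ⟨b, h⟩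
  rw [toFun, dif_pos hex]
  exact p.2.1 hex.choose_spec h

theorem toFun_of_notMem_dom [Nonempty A] {p : FPF A} {y : A} (h : y ∉ p.dom) :
    p.toFun y = Classical.arbitrary A :=
  dif_neg fun hex => h (mem_dom.2 hex)

theorem agrees_toFun [Nonempty A] (p : FPF A) : agrees p.toFun p :=
  fun _ _ h => toFun_eq_of_mem h

end FPF

def chainLimit [Nonempty A] (f : ℕ → FPF A) (y : A) : A :=
  (f (if h : ∃ n, y ∈ (f n).dom then h.choose else 0)).toFun y

theorem eventually_toFun_eq_chainLimit [Nonempty A] {f : ℕ → FPF A} (hf : Monotone f) (y : A) :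
    ∀ᶠ k in atTop, (f k).toFun y = chainLimit f y := by
  unfold chainLimit
  split_ifs with h
  · obtain ⟨b, hb⟩ := FPF.mem_dom.1 h.choose_spec
    filter_upwards [eventually_ge_atTop h.choose] with k hk
    rw [FPF.toFun_eq_of_mem hb, FPF.toFun_eq_of_mem (hf hk hb)]
  · push Not at h
    exact Eventually.of_forall fun k => by
      rw [FPF.toFun_of_notMem_dom (h k), FPF.toFun_of_notMem_dom (h 0)]

theorem agrees_chainLimit [Nonempty A] {f : ℕ → FPF A} (hf : Monotone f) (n : ℕ) :
    agrees (chainLimit f) (f n) := by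
  intro y b hb
  obtain ⟨k, hk, hnk⟩ :=
    ((eventually_toFun_eq_chainLimit hf y).and (eventually_ge_atTop n)).exists
  rw [← hk, FPF.toFun_eq_of_mem (hf hnk hb)]

section Moduli

variable (Φ : (A → A) → A)

def IsModulus (β : A → A) (S : Finset A) : Prop :=
  ∀ γ : A → A, (∀ y ∈ S, γ y = β y) → Φ γ = Φ β

def Decided (p : FPF A) : Prop := ∃ c, ∀ γ : A → A, agrees γ p → Φ γ = c

def minModulus (β : A → A) : Finset A :=
  if h : {S | IsModulus Φ β S}.Nonempty then Function.argminOn Finset.card _ h else ∅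

variable {Φ}

theorem exists_isModulus_of_continuous (hΦ : letI : TopologicalSpace A := ⊥; Continuous Φ)
    (β : A → A) : ∃ S, IsModulus Φ β S := by
  let _ : TopologicalSpace A := ⊥
  have : DiscreteTopology A := ⟨rfl⟩
  obtain ⟨I, u, hu, hsub⟩ :=
    isOpen_pi_iff.1 (hΦ.isOpen_preimage {Φ β} (isOpen_discrete _)) β rfl
  exact ⟨I, fun γ hγ => hsub fun a ha => (hγ a ha).symm ▸ (hu a ha).2⟩

theorem minModulus_isModulus {β : A → A} (h : ∃ S, IsModulus Φ β S) :
    IsModulus Φ β (minModulus Φ β) := by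
  rw [minModulus, dif_pos (show {S | IsModulus Φ β S}.Nonempty from h)]
  exact Function.argminOn_mem Finset.card {S | IsModulus Φ β S} h

theorem card_minModulus_le {β : A → A} {S : Finset A} (hS : IsModulus Φ β S) :
    (minModulus Φ β).card ≤ S.card := by
  rw [minModulus, dif_pos ⟨S, hS⟩]
  exact Function.argminOn_le _ _ hS

theorem IsModulus.of_eqOn {α β : A → A} {S : Finset A} (hS : IsModulus Φ α S)
    (hβ : ∀ y ∈ S, β y = α y) : IsModulus Φ β S := by
  intro γ hγ
  rw [hS β hβ]
  exact hS γ fun y hy => (hγ y hy).trans (hβ y hy)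

/-- Gluing `γ` on `S` to `β` elsewhere would otherwise give a function on which `Φ` takes both
values `Φ γ` and `Φ β`. -/
theorem IsModulus.exists_mem_notMem_dom_of_ne {β γ : A → A} {p : FPF A} {S W : Finset A}
    (hS : IsModulus Φ γ S) (hW : IsModulus Φ β W) (hγ : agrees γ p) (hβ : agrees β p)
    (hne : Φ γ ≠ Φ β) : ∃ y ∈ S, y ∈ W ∧ y ∉ p.dom := by
  by_contra! h
  let glued : A → A := fun y => if y ∈ S then γ y else β y
  refine hne ((hS glued fun y hy => if_pos hy).symm.trans (hW glued fun y hy => ?_))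
  by_cases hyS : y ∈ S
  · obtain ⟨b, hb⟩ := FPF.mem_dom.1 (h y hyS hy)
    simp only [glued, if_pos hyS, hγ hb, hβ hb]
  · exact if_neg hyS

/-- Each step adds to `B` a point of `E` lying in infinitely many `W k`; it is new because `E`
avoids `s m ⊇ B`. -/
theorem exists_card_eq_infinite_setOf_subset (s : ℕ → Set A) (W : ℕ → Finset A)
    (hfair : ∀ k, ∃ m, ↑(W k) ⊆ s m)
    (hescape : ∀ m, ∃ E : Finset A, (∀ y ∈ E, y ∉ s m) ∧ ∀ᶠ k in atTop, ∃ y ∈ E, y ∈ W k)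
    (j : ℕ) : ∃ B : Finset A, B.card = j ∧ {k | B ⊆ W k}.Infinite := by
  induction j with
  | zero =>
    refine ⟨∅, rfl, ?_⟩
    simpa only [Finset.empty_subset, Set.ofPred_true] using Set.infinite_univ
  | succ j ih =>
    obtain ⟨B, hBcard, hK⟩ := ih
    obtain ⟨k₀, hBk₀⟩ := hK.nonempty
    obtain ⟨m, hm⟩ := hfair k₀
    obtain ⟨E, hEm, hE⟩ := hescape m
    rw [← Nat.cofinite_eq_atTop, eventually_cofinite] at hE
    obtain ⟨y, hyE, hy⟩ : ∃ y ∈ E, {k | B ⊆ W k ∧ y ∈ W k}.Infinite := by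
      by_contra! hfin
      refine (hK.sdiff hE).mono ?_ (E.finite_toSet.biUnion fun y hy => hfin y hy)
      rintro k ⟨hk, hkE⟩
      obtain ⟨y, hyE, hyk⟩ := not_not.1 hkE
      exact Set.mem_biUnion hyE ⟨hk, hyk⟩
    have hyB : y ∉ B := fun h => hEm y hyE (hm (hBk₀ h))
    refine ⟨insert y B, by rw [Finset.card_insert_of_notMem hyB, hBcard], hy.mono ?_⟩
    rintro k ⟨hBk, hyk⟩
    exact Finset.insert_subset hyk hBk

theorem exists_decided_of_forall_minModulus_subset [Nonempty A]
    (hΦ : ∀ β, ∃ S, IsModulus Φ β S) {p : ℕ → FPF A} (hp : Monotone p)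
    (hfair : ∀ k, ∃ m, ↑(minModulus Φ (p k).toFun) ⊆ (p m).dom) : ∃ n, Decided Φ (p n) := by
  by_contra! hund
  set α := chainLimit p
  obtain ⟨S, hS⟩ := hΦ α
  have hconv : ∀ᶠ k in atTop, ∀ y ∈ S, (p k).toFun y = α y :=
    (eventually_all_finset S).2 fun y _ => eventually_toFun_eq_chainLimit hp y
  have hescape : ∀ m, ∃ E : Finset A, (∀ y ∈ E, y ∉ (p m).dom) ∧
      ∀ᶠ k in atTop, ∃ y ∈ E, y ∈ minModulus Φ (p k).toFun := by
    intro m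
    have hm := hund m
    simp only [Decided, not_exists, not_forall, exists_prop] at hm
    obtain ⟨γ, hγ, hne⟩ := hm (Φ α)
    obtain ⟨Sγ, hSγ⟩ := hΦ γ
    refine ⟨Sγ.filter (· ∉ (p m).dom), fun y hy => (Finset.mem_filter.1 hy).2, ?_⟩
    filter_upwards [eventually_ge_atTop m, hconv] with k hmk hk
    obtain ⟨y, hyS, hyW, hy⟩ := hSγ.exists_mem_notMem_dom_of_ne (minModulus_isModulus (hΦ _))
      hγ (fun _ _ h => FPF.toFun_eq_of_mem (hp hmk h)) (by rwa [hS _ hk])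
    exact ⟨y, Finset.mem_filter.2 ⟨hyS, hy⟩, hyW⟩
  obtain ⟨B, hBcard, hK⟩ :=
    exists_card_eq_infinite_setOf_subset _ _ hfair hescape (S.card + 1)
  obtain ⟨N, hN⟩ := eventually_atTop.1 hconv
  obtain ⟨k, hBk, hNk⟩ := hK.exists_gt N
  have := (Finset.card_le_card hBk).trans (card_minModulus_le (hS.of_eqOn (hN k hNk.le)))
  omega

end Moduli

/-- Nodes are indexed by the list of answers received so far, latest first. -/
structure QueryStrategy (A : Type u) where
  query : List A → A
  node : List A → FPF A
  node_nil : node [] = FPF.empty A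
  query_notMem_dom : ∀ l, query l ∉ (node l).dom
  node_cons : ∀ b l, (node (b :: l)).val = insert (query l, b) (node l).val

namespace QueryStrategy

variable (S : QueryStrategy A) (Stop : FPF A → Prop)

theorem node_cons_dom (b : A) (l : List A) :
    (S.node (b :: l)).dom = insert (S.query l) (S.node l).dom := by
  simp only [FPF.dom, S.node_cons, Set.image_insert_eq]

theorem node_mono {l l' : List A} (h : l <:+ l') : S.node l ≤ S.node l' := by
  obtain ⟨u, rfl⟩ := h
  induction u with
  | nil => exact le_rfl
  | cons b u ih =>
    refine ih.trans ?_
    show (S.node _).val ⊆ (S.node _).val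
    rw [List.cons_append, S.node_cons]
    exact Set.subset_insert _ _

theorem mem_node_of_cons_suffix {b : A} {l l' : List A} (h : b :: l <:+ l') :
    (S.query l, b) ∈ (S.node l').val :=
  S.node_mono h (by rw [S.node_cons]; exact Set.mem_insert _ _)

theorem suffix_of_node_le {l l' : List A} (h : S.node l ≤ S.node l') : l <:+ l' := by
  induction l with
  | nil => exact List.nil_suffix
  | cons b m ih =>
    have hm : m <:+ l' := ih ((S.node_mono (List.suffix_cons b m)).trans h)
    have hb : (S.query m, b) ∈ (S.node l').val := h (S.mem_node_of_cons_suffix List.suffix_rfl)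
    obtain ⟨c, hc⟩ := exists_cons_suffix_of_suffix_of_ne hm fun hml =>
      S.query_notMem_dom m (FPF.mem_dom.2 ⟨b, hml ▸ hb⟩)
    rwa [(S.node l').2.1 hb (S.mem_node_of_cons_suffix hc)]

theorem node_le_node_iff {l l' : List A} : S.node l ≤ S.node l' ↔ l <:+ l' :=
  ⟨S.suffix_of_node_le, S.node_mono⟩

theorem node_injective : Function.Injective S.node := fun _ _ h =>
  (S.suffix_of_node_le h.le).eq_of_length
    (le_antisymm (S.suffix_of_node_le h.le).length_le (S.suffix_of_node_le h.ge).length_le)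

theorem node_lt_node_iff {l l' : List A} : S.node l < S.node l' ↔ l <:+ l' ∧ l ≠ l' := by
  rw [lt_iff_le_and_ne, S.node_le_node_iff, S.node_injective.ne_iff]

theorem node_lt_node_cons (b : A) (l : List A) : S.node l < S.node (b :: l) :=
  S.node_lt_node_iff.2 ⟨List.suffix_cons b l, (List.cons_ne_self b l).symm⟩

def Reaches : List A → Prop
  | [] => True
  | _ :: l => ¬Stop (S.node l) ∧ Reaches l

theorem reaches_cons {b : A} {l : List A} :
    S.Reaches Stop (b :: l) ↔ ¬Stop (S.node l) ∧ S.Reaches Stop l := Iff.rfl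

variable {S Stop} in
theorem Reaches.of_suffix {l l' : List A} (h : S.Reaches Stop l') (hs : l <:+ l') :
    S.Reaches Stop l := by
  induction l' with
  | nil => rw [List.suffix_nil.1 hs]; trivial
  | cons b l' ih =>
    rcases List.suffix_cons_iff.1 hs with rfl | hs
    exacts [h, ih h.2 hs]

variable {S Stop} in
theorem Reaches.not_node_of_suffix_of_ne {l l' : List A} (h : S.Reaches Stop l')
    (hs : l <:+ l') (hne : l ≠ l') : ¬Stop (S.node l) := by
  obtain ⟨b, hb⟩ := exists_cons_suffix_of_suffix_of_ne hs hne
  exact (h.of_suffix hb).1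

def tree : Set (FPF A) := S.node '' {l | S.Reaches Stop l}

theorem isLeaf_tree_iff {l : List A} (hl : S.Reaches Stop l) :
    IsLeaf (S.tree Stop) (S.node l) ↔ Stop (S.node l) := by
  constructor
  · rintro ⟨-, hmax⟩
    by_contra h
    exact hmax ⟨_, ⟨S.query l :: l, (S.reaches_cons Stop (b := S.query l)).2 ⟨h, hl⟩, rfl⟩,
      S.node_lt_node_cons _ l⟩
  · refine fun h => ⟨⟨l, hl, rfl⟩, ?_⟩
    rintro ⟨_, ⟨l', hl', rfl⟩, hlt⟩
    obtain ⟨hs, hne⟩ := S.node_lt_node_iff.1 hlt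
    exact hl'.not_node_of_suffix_of_ne hs hne h

theorem isTreeOn_tree : IsTreeOn (FPF.empty A) (S.tree Stop) := by
  refine ⟨⟨[], show S.Reaches Stop [] from trivial, S.node_nil⟩, ?_, ?_⟩
  · rintro _ ⟨l, -, rfl⟩
    rw [← S.node_nil]
    exact S.node_mono (List.nil_suffix)
  · rintro _ ⟨l, -, rfl⟩ _ ⟨⟨l₁, -, rfl⟩, h₁⟩ _ ⟨⟨l₂, -, rfl⟩, h₂⟩ -
    simp only [S.node_le_node_iff] at h₁ h₂ ⊢
    exact List.suffix_or_suffix_of_suffix h₁ h₂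

theorem immSucc_tree_iff {l : List A} (hl : S.Reaches Stop l) (hstop : ¬Stop (S.node l))
    (q : FPF A) : ImmSucc (S.tree Stop) (S.node l) q ↔
      S.node l < q ∧ q.dom = insert (S.query l) (S.node l).dom := by
  constructor
  · rintro ⟨⟨l', hl', rfl⟩, hlt, hmin⟩
    obtain ⟨hs, hne⟩ := S.node_lt_node_iff.1 hlt
    obtain ⟨b, hb⟩ := exists_cons_suffix_of_suffix_of_ne hs hne
    obtain rfl : b :: l = l' := by
      by_contra hne'
      exact hmin ⟨_, ⟨_, hl'.of_suffix hb, rfl⟩, S.node_lt_node_cons b l,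
        S.node_lt_node_iff.2 ⟨hb, hne'⟩⟩
    exact ⟨hlt, S.node_cons_dom b l⟩
  · rintro ⟨hlt, hdom⟩
    obtain ⟨b, hb⟩ := FPF.mem_dom.1 (hdom ▸ Set.mem_insert _ _ : S.query l ∈ q.dom)
    obtain rfl : q = S.node (b :: l) :=
      Subtype.ext ((FPF.val_eq_insert_of_le hlt.le hb hdom).trans (S.node_cons b l).symm)
    refine ⟨⟨_, (S.reaches_cons Stop (b := b)).2 ⟨hstop, hl⟩, rfl⟩, hlt, ?_⟩
    rintro ⟨_, ⟨l', -, rfl⟩, h₁, h₂⟩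
    obtain ⟨hs₁, hne₁⟩ := S.node_lt_node_iff.1 h₁
    obtain ⟨hs₂, hne₂⟩ := S.node_lt_node_iff.1 h₂
    rcases List.suffix_cons_iff.1 hs₂ with h | h
    · exact hne₂ h
    · exact hne₁ (hs₁.eq_of_length (le_antisymm hs₁.length_le h.length_le))

theorem isTotalSeqTree_tree : IsTotalSeqTree (S.tree Stop) := by
  refine ⟨S.isTreeOn_tree Stop, ?_⟩
  rintro _ ⟨l, hl, rfl⟩ hleaf
  have hstop : ¬Stop (S.node l) := fun h => hleaf ((S.isLeaf_tree_iff Stop hl).2 h)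
  exact ⟨S.query l, S.query_notMem_dom l, S.immSucc_tree_iff Stop hl hstop⟩

def walk (α : A → A) : ℕ → List A
  | 0 => []
  | n + 1 => α (S.query (walk α n)) :: walk α n

theorem walk_succ (α : A → A) (n : ℕ) :
    S.walk α (n + 1) = α (S.query (S.walk α n)) :: S.walk α n := rfl

theorem length_walk (α : A → A) (n : ℕ) : (S.walk α n).length = n := by
  induction n with
  | zero => rfl
  | succ n ih => simp [walk, ih]

theorem agrees_node_walk (α : A → A) (n : ℕ) : agrees α (S.node (S.walk α n)) := by
  induction n with
  | zero =>
    rw [walk, S.node_nil]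
    exact fun _ _ h => absurd h (Set.notMem_empty _)
  | succ n ih =>
    intro y b hyb
    rw [walk, S.node_cons, Set.mem_insert_iff] at hyb
    rcases hyb with h | h
    · obtain ⟨rfl, rfl⟩ := Prod.mk.inj h
      rfl
    · exact ih h

theorem monotone_node_walk (α : A → A) : Monotone fun n => S.node (S.walk α n) :=
  monotone_nat_of_le_succ fun n => S.walk_succ α n ▸ S.node_mono (List.suffix_cons _ _)

theorem reaches_walk_iff (α : A → A) (n : ℕ) :
    S.Reaches Stop (S.walk α n) ↔ ∀ m < n, ¬Stop (S.node (S.walk α m)) := by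
  induction n with
  | zero => simp [walk, Reaches]
  | succ n ih =>
    rw [walk_succ, reaches_cons, ih, Nat.forall_lt_succ_right, and_comm]

theorem exists_isLeaf {α : A → A} (h : ∃ n, Stop (S.node (S.walk α n))) :
    ∃ v, IsLeaf (S.tree Stop) v ∧ agrees α v ∧ Stop v :=
  ⟨_, (S.isLeaf_tree_iff Stop ((S.reaches_walk_iff Stop α _).2 fun _ hm => Nat.find_min h hm)).2
    (Nat.find_spec h), S.agrees_node_walk α _, Nat.find_spec h⟩

/-- An infinite chain in the tree is, by the freshness of the queries, the walk of its limit. -/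
theorem wellFoundedTree_tree [Nonempty A] (hstop : ∀ α, ∃ n, Stop (S.node (S.walk α n))) :
    WellFoundedTree (S.tree Stop) := by
  rintro ⟨f, hfT, hf⟩
  choose lf hlf hflf using hfT
  have hsucc : ∀ n, lf n <:+ lf (n + 1) ∧ lf n ≠ lf (n + 1) := fun n =>
    S.node_lt_node_iff.1 (by rw [hflf, hflf]; exact hf n.lt_succ_self)
  have hlen : ∀ n, n ≤ (lf n).length := by
    intro n
    induction n with
    | zero => exact Nat.zero_le _
    | succ n ih =>
      have := (hsucc n).1.length_le.lt_of_ne fun h => (hsucc n).2 ((hsucc n).1.eq_of_length h)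
      omega
  set α := chainLimit f
  have hshort : ∀ n, S.walk α n ≠ lf (n + 1) := fun n h => by
    have := hlen (n + 1)
    rw [← h, length_walk] at this
    omega
  have hwalk : ∀ n, S.walk α n <:+ lf n := by
    intro n
    induction n with
    | zero => exact List.nil_suffix
    | succ n ih =>
      obtain ⟨b, hb⟩ := exists_cons_suffix_of_suffix_of_ne (ih.trans (hsucc n).1) (hshort n)
      have hαb : α (S.query (S.walk α n)) = b :=
        agrees_chainLimit hf.monotone (n + 1) (hflf (n + 1) ▸ S.mem_node_of_cons_suffix hb)
      rwa [walk_succ, hαb]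
  obtain ⟨n, hn⟩ := hstop α
  exact (hlf (n + 1)).not_node_of_suffix_of_ne ((hwalk n).trans (hsucc n).1) (hshort n) hn

end QueryStrategy

section Fair

variable [Infinite A] (D : FPF A → Finset A)

def fairQuery (p : FPF A) : List A → A
  | x :: _ => if x ∈ p.dom then p.fresh else x
  | [] => p.fresh

theorem fairQuery_notMem_dom (p : FPF A) (queue : List A) : fairQuery p queue ∉ p.dom := by
  unfold fairQuery
  split
  · split_ifs with h
    exacts [p.fresh_notMem_dom, h]
  · exact p.fresh_notMem_dom

/-- The second component is the first-in-first-out queue of pending demands. -/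
def fairState : List A → FPF A × List A
  | [] => (FPF.empty A, (D (FPF.empty A)).toList)
  | b :: l =>
    let p := (fairState l).1.extend (fairQuery (fairState l).1 (fairState l).2) b
    (p, (fairState l).2.tail ++ (D p).toList)

def fairStrategy : QueryStrategy A where
  query l := fairQuery (fairState D l).1 (fairState D l).2
  node l := (fairState D l).1
  node_nil := rfl
  query_notMem_dom _ := fairQuery_notMem_dom _ _
  node_cons _ _ := FPF.extend_val _ (fairQuery_notMem_dom _ _)

/-- A demand at position `j` of the queue is answered within `j + 1` steps. -/
theorem exists_demand_subset_dom (α : A → A) (k : ℕ) :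
    ∃ m, ↑(D ((fairStrategy D).node ((fairStrategy D).walk α k))) ⊆
      ((fairStrategy D).node ((fairStrategy D).walk α m)).dom := by
  set S := fairStrategy D
  let queue : ℕ → List A := fun n => (fairState D (S.walk α n)).2
  have hqueue : ∀ n, queue (n + 1) = (queue n).tail ++ (D (S.node (S.walk α (n + 1)))).toList :=
    fun _ => rfl
  have hhead : ∀ n x, (queue n).head? = some x → x ∈ (S.node (S.walk α (n + 1))).dom := by
    intro n x h
    obtain ⟨rest, hq⟩ := List.head?_eq_some_iff.1 h
    rw [S.walk_succ, S.node_cons_dom]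
    show x ∈ insert (fairQuery (fairState D (S.walk α n)).1 (queue n)) _
    rw [hq, fairQuery]
    split_ifs with hx
    exacts [Set.mem_insert_of_mem _ hx, Set.mem_insert _ _]
  have hpos : ∀ j n x, (queue n)[j]? = some x → x ∈ (S.node (S.walk α (n + j + 1))).dom := by
    intro j
    induction j with
    | zero => exact fun n x h => hhead n x (by rwa [List.head?_eq_getElem?])
    | succ j ih =>
      intro n x h
      have hj : j < (queue n).tail.length := by
        have := (List.getElem?_eq_some_iff.1 h).1
        simp only [List.length_tail]
        omega
      have := ih (n + 1) x (by rw [hqueue, List.getElem?_append_left hj, List.getElem?_tail, h])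
      rwa [show n + 1 + j + 1 = n + (j + 1) + 1 by omega] at this
  have hmem : ∀ x ∈ D (S.node (S.walk α k)), x ∈ queue k := by
    intro x hx
    cases k with
    | zero => exact Finset.mem_toList.2 hx
    | succ k => exact hqueue k ▸ List.mem_append_right _ (Finset.mem_toList.2 hx)
  refine ⟨k + (queue k).length, fun x hx => ?_⟩
  obtain ⟨j, hj⟩ := List.mem_iff_getElem?.1 (hmem x hx)
  have hjlen := (List.getElem?_eq_some_iff.1 hj).1
  exact FPF.dom_mono (S.monotone_node_walk α (by omega)) (hpos j k x hj)

end Fair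

/-- Every total continuous function `Φ : A^A → A` (`A` infinite
discrete, `A^A` with the product topology) is sequential: there are a
well-founded total sequential tree `T` and a function `F` on its leaves with
`Φ = Φ_{T,F}`. -/
theorem statement0 {A : Type u} [Infinite A] (Φ : (A → A) → A)
    (hΦ : letI : TopologicalSpace A := ⊥; Continuous Φ) :
    ∃ (T : Set (FPF A)) (F : FPF A → A),
      IsTotalSeqTree T ∧ WellFoundedTree T ∧
      ∀ α : A → A, ∃ v, IsLeaf T v ∧ agrees α v ∧ Φ α = F v := by
  have hmod := exists_isModulus_of_continuous hΦ
  let S := fairStrategy fun p => minModulus Φ p.toFun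
  have hstop : ∀ α, ∃ n, Decided Φ (S.node (S.walk α n)) := fun α =>
    exists_decided_of_forall_minModulus_subset hmod (S.monotone_node_walk α)
      (exists_demand_subset_dom (fun p => minModulus Φ p.toFun) α)
  refine ⟨S.tree (Decided Φ), fun v => Φ v.toFun, S.isTotalSeqTree_tree _,
    S.wellFoundedTree_tree _ hstop, fun α => ?_⟩
  obtain ⟨v, hleaf, hα, c, hc⟩ := S.exists_isLeaf _ (hstop α)
  exact ⟨v, hleaf, hα, (hc α hα).trans (hc _ v.agrees_toFun).symm⟩

end OostenK2
end
end

section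
/- Given, for each a ∈ A, a partial sequential function F_a : A^A ⇀ A, there exists α ∈ A^A such that for all β ∈ A^A and a ∈ A, φ^a(α,β) is defined iff F_a(β) is defined, and they are equal when defined. Consequently, if all F_a(β) are defined, then αβ is defined and (αβ)(a) = F_a(β) for all a. -/
open Classical

noncomputable section

namespace OostenK2

universe u

variable {A : Type u}

/-! The realizer `α` answers a query `⟨a, b₀, …, b_{k-1}⟩` by walking down the total
sequential tree of `F_a` from the root, reading `b₀, …, b_{k-1}` as the values at the
successively interrogated arguments. If the walk ends in a leaf `v` it answers `⟨r, F v⟩`,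
otherwise `⟨q, x⟩` with `x` the argument interrogated next. The `a`-interrogations of `β`
by `α` are then exactly the walks along the path of `β`, and such a walk ends in a
leaf `v` iff `β` extends `v`. -/

theorem of_forall_exists_gt_of_finite_Iic {X : Type*} [PartialOrder X] {P : X → Prop} {v : X}
    (hfin : (Set.Iic v).Finite) {p₀ : X} (hp₀ : p₀ ≤ v) (h₀ : P p₀)
    (hstep : ∀ p ≤ v, P p → p ≠ v → ∃ p' ≤ v, p < p' ∧ P p') : P v := by
  obtain ⟨m, -, ⟨hmv, hm⟩, hmax⟩ :=
    (hfin.subset (fun _ hp => hp.1) : {p | p ≤ v ∧ P p}.Finite).exists_le_maximal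
      (show p₀ ∈ {p | p ≤ v ∧ P p} from ⟨hp₀, h₀⟩)
  by_contra hv
  obtain ⟨p', hp'v, hmp', hp'⟩ := hstep m hmv hm (fun h => hv (h ▸ hm))
  exact hmp'.not_ge (hmax ⟨hp'v, hp'⟩ hmp'.le)

lemma FPF.mem_dom_s5 {p : FPF A} {a : A} : a ∈ p.dom ↔ ∃ b, (a, b) ∈ p.val := by
  constructor
  · rintro ⟨⟨x, y⟩, hxy, rfl⟩
    exact ⟨y, hxy⟩
  · rintro ⟨b, hb⟩
    exact ⟨(a, b), hb, rfl⟩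

lemma FPF.dom_mono_s5 {p v : FPF A} (h : p ≤ v) : p.dom ⊆ v.dom := by
  rintro x ⟨y, hy, rfl⟩
  exact ⟨y, h hy, rfl⟩

lemma FPF.finite_Iic (v : FPF A) : (Set.Iic v).Finite :=
  (v.prop.2.finite_subsets.preimage Subtype.val_injective.injOn).subset fun _ h => h

def FPF.update (p : FPF A) (a b : A) : FPF A :=
  ⟨insert (a, b) {x ∈ p.val | x.1 ≠ a}, by
    rintro x y y' (⟨rfl, rfl⟩ | ⟨hy, hx⟩) (h' | ⟨hy', hx'⟩)
    · exact ((Prod.mk.injEq ..).mp h').2.symm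
    · exact absurd rfl hx'
    · exact absurd ((Prod.mk.injEq ..).mp h').1 hx
    · exact p.prop.1 hy hy',
    (p.prop.2.subset (Set.sep_subset _ _)).insert _⟩

lemma FPF.mem_update {p : FPF A} {a b x y : A} :
    (x, y) ∈ (p.update a b).val ↔ (x = a ∧ y = b) ∨ ((x, y) ∈ p.val ∧ x ≠ a) := by
  simp only [FPF.update, Set.mem_insert_iff, Set.mem_sep_iff, Prod.mk.injEq]

lemma FPF.update_le {p v : FPF A} {a b : A} (hp : p ≤ v) (hab : (a, b) ∈ v.val) :
    p.update a b ≤ v := by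
  rintro ⟨x, y⟩ hxy
  rcases FPF.mem_update.1 hxy with ⟨rfl, rfl⟩ | ⟨h, -⟩
  exacts [hab, hp h]

lemma FPF.lt_update {p : FPF A} {a : A} (ha : a ∉ p.dom) (b : A) : p < p.update a b := by
  refine lt_of_le_of_ne (fun ⟨x, y⟩ hxy => ?_) fun h => ha ?_
  · exact FPF.mem_update.2 (Or.inr ⟨hxy, fun hxa => ha (FPF.mem_dom_s5.2 ⟨y, hxa ▸ hxy⟩)⟩)
  · exact FPF.mem_dom_s5.2 ⟨b, h ▸ FPF.mem_update.2 (Or.inl ⟨rfl, rfl⟩)⟩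

lemma FPF.dom_update (p : FPF A) (a b : A) : (p.update a b).dom = insert a p.dom := by
  ext x
  simp only [FPF.mem_dom_s5, FPF.mem_update, Set.mem_insert_iff]
  by_cases hx : x = a <;> simp [hx]

lemma agrees_update {β : A → A} {p : FPF A} {a : A} (hp : agrees β p) :
    agrees β (p.update a (β a)) := by
  intro x y hxy
  rcases FPF.mem_update.1 hxy with ⟨rfl, rfl⟩ | ⟨h, -⟩
  exacts [rfl, hp h]

lemma agrees_empty (β : A → A) : agrees β (FPF.empty A) :=
  fun _ _ h => absurd h (Set.notMem_empty _)

section TotalSeqTree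

variable [Nonempty A] {T : Set (FPF A)}

/-- The argument interrogated at a non-leaf `p` of a total sequential tree `T`. -/
def treeArg (T : Set (FPF A)) (p : FPF A) : A :=
  if h : ∃ a ∉ p.dom, ∀ q : FPF A, ImmSucc T p q ↔ p < q ∧ q.dom = insert a p.dom
  then h.choose else Classical.arbitrary A

lemma treeArg_spec (hT : IsTotalSeqTree T) {p : FPF A} (hp : p ∈ T) (hnl : ¬IsLeaf T p) :
    treeArg T p ∉ p.dom ∧
      ∀ q : FPF A, ImmSucc T p q ↔ p < q ∧ q.dom = insert (treeArg T p) p.dom := by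
  have h := hT.2 p hp hnl
  rw [treeArg, dif_pos h]
  exact h.choose_spec

lemma update_treeArg_mem (hT : IsTotalSeqTree T) {p : FPF A} (hp : p ∈ T)
    (hnl : ¬IsLeaf T p) (b : A) : p.update (treeArg T p) b ∈ T := by
  obtain ⟨ha, hsucc⟩ := treeArg_spec hT hp hnl
  exact ((hsucc _).2 ⟨FPF.lt_update ha b, FPF.dom_update p _ b⟩).1

/-- The next element above `p` on the way to `v` is an immediate successor of `p`,
which is defined at `treeArg T p`. -/
lemma treeArg_mem_dom (hT : IsTotalSeqTree T) {p v : FPF A} (hp : p ∈ T) (hv : v ∈ T)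
    (hpv : p < v) : treeArg T p ∈ v.dom := by
  have hnl : ¬IsLeaf T p := fun hl => hl.2 ⟨v, hv, hpv⟩
  set S : Set (FPF A) := {t | t ∈ T ∧ p < t ∧ t ≤ v}
  obtain ⟨m, -, ⟨hmT, hpm, hmv⟩, hmin⟩ :=
    ((v.finite_Iic).subset fun _ ht => ht.2.2 : S.Finite).exists_le_minimal
      (show v ∈ S from ⟨hv, hpv, le_rfl⟩)
  have hsucc : ImmSucc T p m := by
    refine ⟨hmT, hpm, fun ⟨t, htT, hpt, htm⟩ => ?_⟩
    exact htm.not_ge (hmin ⟨htT, hpt, htm.le.trans hmv⟩ htm.le)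
  have hdom := (((treeArg_spec hT hp hnl).2 m).1 hsucc).2
  exact FPF.dom_mono_s5 hmv (hdom ▸ Set.mem_insert _ _)

variable (T) in
def treeStep (p : FPF A) (b : A) : Option (FPF A) :=
  if p ∈ T ∧ ¬IsLeaf T p then some (p.update (treeArg T p) b) else none

variable (T) in
def treeWalk (L : List A) : Option (FPF A) := L.foldlM (treeStep T) (FPF.empty A)

lemma treeWalk_nil : treeWalk T [] = some (FPF.empty A) := rfl

lemma treeWalk_append_singleton (L : List A) (b : A) :
    treeWalk T (L ++ [b]) = (treeWalk T L).bind (treeStep T · b) := by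
  simp [treeWalk, List.foldlM_append]

lemma treeWalk_append_singleton_of_some {L : List A} {p : FPF A} (hL : treeWalk T L = some p)
    (hp : p ∈ T) (hnl : ¬IsLeaf T p) (b : A) :
    treeWalk T (L ++ [b]) = some (p.update (treeArg T p) b) := by
  rw [treeWalk_append_singleton, hL, Option.bind_some, treeStep, if_pos ⟨hp, hnl⟩]

lemma mem_of_treeWalk_eq_some (hT : IsTotalSeqTree T) {L : List A} {p : FPF A}
    (hL : treeWalk T L = some p) : p ∈ T := by
  induction L using List.reverseRecOn generalizing p with
  | nil => exact Option.some.inj hL ▸ hT.1.1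
  | append_singleton L b ih =>
    rw [treeWalk_append_singleton] at hL
    obtain ⟨p', hp', hstep⟩ := Option.bind_eq_some_iff.1 hL
    rw [treeStep] at hstep
    split_ifs at hstep with h
    exact Option.some.inj hstep ▸ update_treeArg_mem hT h.1 h.2 b

end TotalSeqTree

section Interrogation

variable {mk : List A → A} {qp rp : A → A} {a : A} {α β : A → A}

lemma aInterrog_nil : AInterrog mk qp a α β [] := fun _ hj => absurd hj (Nat.not_lt_zero _)

lemma aInterrog_append_singleton {L : List A} {x : A} :
    AInterrog mk qp a α β (L ++ [x]) ↔
      AInterrog mk qp a α β L ∧ ∃ b, α (mk (a :: L)) = qp b ∧ β b = x := by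
  constructor
  · intro h
    refine ⟨fun j hj => ?_, ?_⟩
    · obtain ⟨b, hb, hβb⟩ := h j (by simpa using hj.trans (Nat.lt_succ_self _))
      rw [List.take_append_of_le_length hj.le, List.getElem_append_left hj] at *
      exact ⟨b, hb, hβb⟩
    · obtain ⟨b, hb, hβb⟩ := h L.length (by simp)
      exact ⟨b, by simpa using hb, by simpa using hβb⟩
  · rintro ⟨hL, b, hb, hβb⟩ j hj
    rcases lt_or_eq_of_le (Nat.le_of_lt_succ (by simpa using hj) : j ≤ L.length) with hj | rfl
    · rw [List.take_append_of_le_length hj.le, List.getElem_append_left hj]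
      exact hL j hj
    · exact ⟨b, by simpa using hb, by simpa using hβb⟩

end Interrogation

section FollowsTree

variable [Nonempty A] {mk : List A → A} {qp rp : A → A} {a : A}
  {T : Set (FPF A)} {Fl : FPF A → A} {α β : A → A}

variable (qp rp) in
def treeReply (T : Set (FPF A)) (Fl : FPF A → A) (p : FPF A) : A :=
  if IsLeaf T p then rp (Fl p) else qp (treeArg T p)

variable (mk qp rp) in
def FollowsTree (a : A) (T : Set (FPF A)) (Fl : FPF A → A) (α : A → A) : Prop :=
  ∀ L p, treeWalk T L = some p → α (mk (a :: L)) = treeReply qp rp T Fl p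

variable (qp rp) in
theorem exists_followsTree (hmk : Function.Injective mk) (T : A → Set (FPF A))
    (Fl : A → FPF A → A) : ∃ α : A → A, ∀ a, FollowsTree mk qp rp a (T a) (Fl a) α := by
  have hinj : Function.Injective fun m : A × List A => mk (m.1 :: m.2) := fun m m' h => by
    simpa [Prod.ext_iff] using hmk h
  refine ⟨Function.extend (fun m : A × List A => mk (m.1 :: m.2))
    (fun m => ((treeWalk (T m.1) m.2).map (treeReply qp rp (T m.1) (Fl m.1))).getD
      (Classical.arbitrary A)) id, fun a L p hp => ?_⟩
  exact (hinj.extend_apply _ _ (a, L)).trans (by simp [hp])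

lemma exists_treeWalk_of_aInterrog (hT : IsTotalSeqTree T)
    (hα : FollowsTree mk qp rp a T Fl α) (hq : Function.Injective qp)
    (hqr : ∀ b c, qp b ≠ rp c) {L : List A}
    (hL : AInterrog mk qp a α β L) : ∃ p, treeWalk T L = some p ∧ agrees β p := by
  induction L using List.reverseRecOn with
  | nil => exact ⟨FPF.empty A, treeWalk_nil, agrees_empty β⟩
  | append_singleton L x ih =>
    obtain ⟨hLx, b, hb, rfl⟩ := aInterrog_append_singleton.1 hL
    obtain ⟨p, hwalk, hβp⟩ := ih hLx
    rw [hα L p hwalk, treeReply] at hb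
    split_ifs at hb with hleaf
    · exact absurd hb.symm (hqr _ _)
    · obtain rfl := hq hb
      exact ⟨_, treeWalk_append_singleton_of_some hwalk (mem_of_treeWalk_eq_some hT hwalk)
        hleaf _, agrees_update hβp⟩

lemma exists_aInterrog_of_isLeaf (hT : IsTotalSeqTree T)
    (hα : FollowsTree mk qp rp a T Fl α) {v : FPF A} (hv : IsLeaf T v) (hβv : agrees β v) :
    ∃ L, AInterrog mk qp a α β L ∧ treeWalk T L = some v := by
  refine of_forall_exists_gt_of_finite_Iic
    (P := fun p => ∃ L, AInterrog mk qp a α β L ∧ treeWalk T L = some p) v.finite_Iic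
    (hT.1.2.1 v hv.1) ⟨[], aInterrog_nil, treeWalk_nil⟩ fun p hpv ⟨L, hL, hwalk⟩ hne => ?_
  have hpT := mem_of_treeWalk_eq_some hT hwalk
  have hpv' := lt_of_le_of_ne hpv hne
  have hnl : ¬IsLeaf T p := fun hl => hl.2 ⟨v, hv.1, hpv'⟩
  obtain ⟨y, hy⟩ := FPF.mem_dom_s5.1 (treeArg_mem_dom hT hpT hv.1 hpv')
  obtain rfl : β (treeArg T p) = y := hβv hy
  refine ⟨_, FPF.update_le hpv hy, FPF.lt_update (treeArg_spec hT hpT hnl).1 _, L ++ [_],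
    aInterrog_append_singleton.2 ⟨hL, treeArg T p, ?_, rfl⟩,
    treeWalk_append_singleton_of_some hwalk hpT hnl _⟩
  rw [hα L p hwalk, treeReply, if_neg hnl]

theorem phiA_iff_of_followsTree (hT : IsTotalSeqTree T)
    (hα : FollowsTree mk qp rp a T Fl α) (hq : Function.Injective qp)
    (hr : Function.Injective rp) (hqr : ∀ b c, qp b ≠ rp c)
    (c : A) : phiA mk qp rp a α β c ↔ ∃ v, IsLeaf T v ∧ agrees β v ∧ Fl v = c := by
  constructor
  · rintro ⟨L, hL, hc⟩
    obtain ⟨p, hwalk, hβp⟩ := exists_treeWalk_of_aInterrog hT hα hq hqr hL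
    rw [hα L p hwalk, treeReply] at hc
    split_ifs at hc with hleaf
    · exact ⟨p, hleaf, hβp, hr hc⟩
    · exact absurd hc (hqr _ _)
  · rintro ⟨v, hv, hβv, rfl⟩
    obtain ⟨L, hL, hwalk⟩ := exists_aInterrog_of_isLeaf hT hα hv hβv
    exact ⟨L, hL, by rw [hα L v hwalk, treeReply, if_pos hv]⟩

end FollowsTree

theorem statement5_general {A : Type u} (code : List A → A)
    (hcode : Function.Injective code) (q r : A) (hqr : q ≠ r)
    (F : A → (A → A) → Option A)
    (hF : ∀ a : A, SeqRel (fun β b => F a β = some b)) :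
    ∃ α : A → A,
      (∀ (β : A → A) (a b : A),
        phiA code (fun x => code [q, x]) (fun x => code [r, x]) a α β b ↔ F a β = some b) ∧
      ∀ β : A → A, (∀ a, ∃ b, F a β = some b) →
        ∃ γ : A → A,
          AppRel code (fun x => code [q, x]) (fun x => code [r, x]) α β γ ∧
          ∀ a, F a β = some (γ a) := by
  have : Nonempty A := ⟨q⟩
  have hq : Function.Injective fun x => code [q, x] := fun x y h => by simpa using hcode h
  have hr : Function.Injective fun x => code [r, x] := fun x y h => by simpa using hcode h
  have hqr' : ∀ b c, code [q, b] ≠ code [r, c] := fun b c h =>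
    hqr (List.cons.inj (hcode h)).1
  choose T Fl hT hFl using hF
  obtain ⟨α, hα⟩ := exists_followsTree _ _ hcode T Fl
  have hφ : ∀ β a b,
      phiA code (fun x => code [q, x]) (fun x => code [r, x]) a α β b ↔ F a β = some b :=
    fun β a b => (phiA_iff_of_followsTree (hT a) (hα a) hq hr hqr' b).trans (hFl a β b).symm
  refine ⟨α, hφ, fun β hdef => ?_⟩
  choose γ hγ using hdef
  exact ⟨γ, fun a => (hφ β a (γ a)).2 (hγ a), hγ⟩

/-- Given partial sequential functions `F_a : A^A ⇀ A` for each
`a ∈ A`, there is `α ∈ A^A` with `φ^a(α,β) ≃ F_a(β)` for all `β, a`; hence if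
all `F_a(β)` are defined then `αβ` is defined with `(αβ)(a) = F_a(β)`. -/
theorem statement5 {A : Type u} [Infinite A] (code : List A → A)
    (hcode : Function.Injective code) (q r : A) (hqr : q ≠ r)
    (F : A → (A → A) → Option A)
    (hF : ∀ a : A, SeqRel (fun β b => F a β = some b)) :
    ∃ α : A → A,
      (∀ (β : A → A) (a b : A),
        phiA code (fun x => code [q, x]) (fun x => code [r, x]) a α β b ↔ F a β = some b) ∧
      ∀ β : A → A, (∀ a, ∃ b, F a β = some b) →
        ∃ γ : A → A,
          AppRel code (fun x => code [q, x]) (fun x => code [r, x]) α β γ ∧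
          ∀ a, F a β = some (γ a) :=
  statement5_general code hcode q r hqr F hF

end OostenK2
end
end
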